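/- Let ω : ℕ → ℝ be any function with ω(n) → ∞ as n → ∞, and for each n set p_n = (log n)/n − 1/n + (log n)/(2n²) + ω(n)/n² (assuming p_n ∈ (0,1) for all large n). Then in the random model with selection probability p_n, the probability that the random set A covers all of S_n tends to 1 as n → ∞. -/

import Mathlib

open Equiv Fin Filter
open scoped Classical

/-- `ρ ∈ S_{n+1}` covers `π ∈ S_n` if `π` occurs as an order-isomorphic subsequence of `ρ`:
there is a strictly increasing `f : Fin n → Fin (n+1)` such that `π i < π j ↔ ρ (f i) < ρ (f j)`. -/
def Covers {n : ℕ} (ρ : Equiv.Perm (Fin (n+1))) (π : Equiv.Perm (Fin n)) : Prop :=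
  ∃ f : Fin n → Fin (n+1), StrictMono f ∧ ∀ i j : Fin n, π i < π j ↔ ρ (f i) < ρ (f j)


def insPerm {n : ℕ} (π : Equiv.Perm (Fin n)) (k v : Fin (n+1)) : Equiv.Perm (Fin (n+1)) :=
  (finSuccEquiv' k).trans ((π.optionCongr).trans (finSuccEquiv' v).symm)

lemma insPerm_self {n : ℕ} (π : Equiv.Perm (Fin n)) (k v : Fin (n+1)) :
    insPerm π k v k = v := by
  simp [insPerm, finSuccEquiv'_at, finSuccEquiv'_symm_none]

lemma insPerm_succAbove {n : ℕ} (π : Equiv.Perm (Fin n)) (k v : Fin (n+1)) (i : Fin n) :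
    insPerm π k v (k.succAbove i) = v.succAbove (π i) := by
  simp [insPerm, finSuccEquiv'_succAbove, finSuccEquiv'_symm_some]

lemma covers_insPerm {n : ℕ} (π : Equiv.Perm (Fin n)) (k v : Fin (n+1)) :
    Covers (insPerm π k v) π := by
  refine ⟨k.succAbove, Fin.strictMono_succAbove k, fun i j => ?_⟩
  rw [insPerm_succAbove, insPerm_succAbove]
  exact ((Fin.strictMono_succAbove v).lt_iff_lt).symm

lemma insPerm_collide {n : ℕ} (π : Equiv.Perm (Fin n)) (k v k' v' : Fin (n+1))
    (hlt : k' < k) (heq : insPerm π k' v' = insPerm π k v) :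
    ∃ j : Fin n, (j : ℕ) + 1 = (k : ℕ) ∧
      (v = castSucc (π j) ∨ v = (π j).succ) := by
  have hk1 : (k : ℕ) - 1 < n := by omega
  set j : Fin n := ⟨(k : ℕ) - 1, hk1⟩ with hj
  have hk' : k' ≤ castSucc j := by
    have : (k' : ℕ) < (k : ℕ) := hlt
    simp only [Fin.le_def, coe_castSucc, hj]
    omega
  have hks : k'.succAbove j = k := by
    rw [succAbove_of_le_castSucc _ _ hk']
    ext; simp [hj]; omega
  have h1 : insPerm π k' v' k = v'.succAbove (π j) := by
    rw [← hks, insPerm_succAbove]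
  have h2 : insPerm π k v k = v := insPerm_self π k v
  refine ⟨j, by simp [hj]; omega, ?_⟩
  rw [heq, h2] at h1
  rcases lt_or_ge (castSucc (π j)) v' with h | h
  · left; rw [h1, succAbove_of_castSucc_lt _ _ h]
  · right; rw [h1, succAbove_of_le_castSucc _ _ h]

lemma card_covers {n : ℕ} (π : Equiv.Perm (Fin n)) :
    n ^ 2 ≤ Set.ncard {ρ : Equiv.Perm (Fin (n+1)) | Covers ρ π} := by
  rcases Nat.eq_zero_or_pos n with hn | hn
  · simp [hn]
  set F : Fin (n+1) × Fin (n+1) → Equiv.Perm (Fin (n+1)) :=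
    fun p => insPerm π p.1 p.2 with hF
  set B : Set (Fin (n+1) × Fin (n+1)) := {p | ∃ p', p'.1 < p.1 ∧ F p' = F p} with hB
  -- bad set has at most 2n elements
  have hBcard : B.ncard ≤ 2 * n := by
    have : B.ncard ≤ (Set.univ : Set (Fin n × Bool)).ncard := by
      apply Set.ncard_le_ncard_of_injOn
        (fun p => (⟨min ((p.1 : ℕ) - 1) (n-1), by omega⟩,
          decide (p.2 = castSucc (π ⟨min ((p.1 : ℕ) - 1) (n-1), by omega⟩))))
      · intro a _; trivial
      · rintro ⟨k, v⟩ hk ⟨k', v'⟩ hk' hgeq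
        obtain ⟨⟨q, vq⟩, hq1, hq2⟩ := hk
        obtain ⟨⟨q', vq'⟩, hq1', hq2'⟩ := hk'
        obtain ⟨j, hj1, hj2⟩ := insPerm_collide π k v q vq hq1 hq2
        obtain ⟨j', hj1', hj2'⟩ := insPerm_collide π k' v' q' vq' hq1' hq2'
        have hb1 := j.isLt
        have hb2 := j'.isLt
        have hjv : (j : ℕ) = min ((k : ℕ) - 1) (n-1) := by omega
        have hjv' : (j' : ℕ) = min ((k' : ℕ) - 1) (n-1) := by omega
        have h1 : min ((k : ℕ) - 1) (n-1) = min ((k' : ℕ) - 1) (n-1) := by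
          have := congrArg (fun x => (x.1 : ℕ)) hgeq; simpa using this
        obtain rfl : k = k' := by apply Fin.ext; omega
        obtain rfl : j = j' := by apply Fin.ext; omega
        have h2 : (decide (v = castSucc (π j)) : Bool)
            = decide (v' = castSucc (π j)) := by
          have h3 := congrArg Prod.snd hgeq
          simp only at h3
          have h4 : min ((k : ℕ) - 1) (n-1) = (j : ℕ) := by omega
          simp only [h4, Fin.eta] at h3
          exact h3
        have hcs : ∀ x : Fin n, castSucc x ≠ succ x := fun x =>
          (Fin.castSucc_lt_succ (i := x)).ne
        rw [decide_eq_decide] at h2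
        refine Prod.ext rfl ?_
        simp only
        rcases hj2 with h | h <;> rcases hj2' with h' | h'
        · rw [h, h']
        · exact absurd ((h2.mp h).symm.trans h') (hcs _)
        · exact absurd ((h2.mpr h').symm.trans h) (hcs _)
        · rw [h, h']
    simpa [Set.ncard_univ, mul_comm] using this
  -- good set
  set G : Set (Fin (n+1) × Fin (n+1)) := Set.univ \ B with hG
  have hGcard : n ^ 2 + 1 ≤ G.ncard := by
    rw [hG, Set.ncard_diff (Set.subset_univ B)]
    have h5 : (Set.univ : Set (Fin (n+1) × Fin (n+1))).ncard = (n+1)^2 := by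
      simp [Set.ncard_univ, sq]
    have h6 : (n+1)^2 = n^2 + 2*n + 1 := by ring
    omega
  have hinj : Set.InjOn F G := by
    rintro ⟨k, v⟩ hk ⟨k', v'⟩ hk' heq
    rcases lt_trichotomy k k' with h | h | h
    · exact absurd ⟨(k, v), h, heq⟩ hk'.2
    · subst h
      have := insPerm_self π k v
      rw [hF] at heq
      simp only at heq
      have hv : v = v' := by
        rw [← insPerm_self π k v, heq, insPerm_self]
      rw [hv]
    · exact absurd ⟨(k', v'), h, heq.symm⟩ hk.2
  have hsub : F '' G ⊆ {ρ : Equiv.Perm (Fin (n+1)) | Covers ρ π} := by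
    rintro ρ ⟨⟨k, v⟩, _, rfl⟩; exact covers_insPerm π k v
  calc n ^ 2 ≤ G.ncard := by omega
    _ = (F '' G).ncard := (Set.ncard_image_of_injOn hinj).symm
    _ ≤ _ := Set.ncard_le_ncard hsub (Set.toFinite _)


open MeasureTheory

/-- The Bernoulli(p) measure on `Bool`. -/
noncomputable def bern (p : ℝ) : Measure Bool :=
  p.toNNReal • Measure.dirac true + (1-p).toNNReal • Measure.dirac false

/-- The random model: each permutation of `S_{n+1}` is selected independently with
probability `p`; a sample point `A : Equiv.Perm (Fin (n+1)) → Bool` records which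
permutations are selected. -/
noncomputable def coverMeasure (n : ℕ) (p : ℝ) :
    Measure (Equiv.Perm (Fin (n+1)) → Bool) :=
  Measure.pi fun _ => bern p

/-- `numUncovered n A` is the number of `π ∈ S_n` not covered by any selected `ρ ∈ A`. -/
noncomputable def numUncovered (n : ℕ) (A : Equiv.Perm (Fin (n+1)) → Bool) : ℕ :=
  Set.ncard {π : Equiv.Perm (Fin n) | ¬ ∃ ρ : Equiv.Perm (Fin (n+1)), A ρ = true ∧ Covers ρ π}

lemma bern_false (p : ℝ) : bern p {false} = ((1-p).toNNReal : ENNReal) := by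
  simp [bern, ENNReal.smul_def, -Measure.coe_nnreal_smul]

lemma bern_univ (p : ℝ) (h0 : 0 ≤ p) (h1 : p ≤ 1) : bern p Set.univ = 1 := by
  simp [bern, ENNReal.smul_def, -Measure.coe_nnreal_smul]
  rw [← ENNReal.coe_add, ← Real.toNNReal_add h0 (by linarith)]
  norm_num

instance bern_finite (p : ℝ) : IsFiniteMeasure (bern p) := by
  constructor
  simp [bern, ENNReal.smul_def, -Measure.coe_nnreal_smul]


lemma coverMeasure_bounds (n : ℕ) (p : ℝ) (h0 : 0 ≤ p) (h1 : p ≤ 1) :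
    1 - (n.factorial : ℝ) * (1-p)^(n^2) ≤
      (coverMeasure n p {A | ∀ π : Equiv.Perm (Fin n), ∃ ρ : Equiv.Perm (Fin (n+1)),
        A ρ = true ∧ Covers ρ π}).toReal ∧
    (coverMeasure n p {A | ∀ π : Equiv.Perm (Fin n), ∃ ρ : Equiv.Perm (Fin (n+1)),
        A ρ = true ∧ Covers ρ π}).toReal ≤ 1 := by
  have hbp : IsProbabilityMeasure (bern p) := ⟨bern_univ p h0 h1⟩
  have hcp : IsProbabilityMeasure (coverMeasure n p) := by
    unfold coverMeasure; infer_instance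
  set μ := coverMeasure n p
  set E : Set (Equiv.Perm (Fin (n+1)) → Bool) :=
    {A | ∀ π : Equiv.Perm (Fin n), ∃ ρ : Equiv.Perm (Fin (n+1)),
        A ρ = true ∧ Covers ρ π} with hE
  set q : ENNReal := ((1-p).toNNReal : ENNReal) with hq
  have hq1 : q ≤ 1 := by
    rw [hq]
    exact_mod_cast Real.toNNReal_le_one.mpr (by linarith)
  set U : Equiv.Perm (Fin n) → Set (Equiv.Perm (Fin (n+1)) → Bool) :=
    fun π => {A | ∀ ρ : Equiv.Perm (Fin (n+1)), Covers ρ π → A ρ = false} with hU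
  -- measure of U π
  have hUm : ∀ π : Equiv.Perm (Fin n), μ (U π) ≤ q ^ (n^2) := by
    intro π
    have hset : U π = Set.pi Set.univ
        (fun ρ => if Covers ρ π then ({false} : Set Bool) else Set.univ) := by
      ext A
      simp only [hU, Set.mem_setOf_eq, Set.mem_pi, Set.mem_univ, true_implies]
      constructor
      · intro h ρ
        split_ifs with hc
        · simpa using h ρ hc
        · trivial
      · intro h ρ hc
        have := h ρ
        rw [if_pos hc] at this
        simpa using this
    have hpi : μ (U π) = ∏ ρ : Equiv.Perm (Fin (n+1)),
        bern p (if Covers ρ π then ({false} : Set Bool) else Set.univ) := by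
      rw [hset]
      exact Measure.pi_pi _ _
    have hpi2 : μ (U π) = q ^ (Finset.univ.filter
        (fun ρ : Equiv.Perm (Fin (n+1)) => Covers ρ π)).card := by
      rw [hpi]
      have : ∀ ρ : Equiv.Perm (Fin (n+1)),
          bern p (if Covers ρ π then ({false} : Set Bool) else Set.univ)
          = if Covers ρ π then q else 1 := by
        intro ρ; split_ifs
        · exact bern_false p
        · exact bern_univ p h0 h1
      rw [Finset.prod_congr rfl (fun ρ _ => this ρ), ← Finset.prod_filter,
        Finset.prod_const]
    rw [hpi2]
    have hcard : n ^ 2 ≤ (Finset.univ.filter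
        (fun ρ : Equiv.Perm (Fin (n+1)) => Covers ρ π)).card := by
      have := card_covers π
      rwa [Set.ncard_eq_toFinset_card', Set.toFinset_setOf] at this
    calc q ^ (Finset.univ.filter (fun ρ : Equiv.Perm (Fin (n+1)) => Covers ρ π)).card
        = q ^ (n^2) * q ^ ((Finset.univ.filter
            (fun ρ : Equiv.Perm (Fin (n+1)) => Covers ρ π)).card - n^2) := by
          rw [← pow_add]; congr 1; omega
      _ ≤ q ^ (n^2) * 1 := mul_le_mul_right (pow_le_one' hq1 _) _
      _ = q ^ (n^2) := mul_one _
  -- complement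
  have hcompl : Eᶜ = ⋃ π : Equiv.Perm (Fin n), U π := by
    ext A
    simp only [hE, hU, Set.mem_compl_iff, Set.mem_setOf_eq, Set.mem_iUnion,
      not_forall, not_exists]
    constructor
    · rintro ⟨π, hπ⟩
      exact ⟨π, fun ρ hc =>
        Bool.eq_false_iff.mpr (fun hA => hπ ρ ⟨hA, hc⟩)⟩
    · rintro ⟨π, hπ⟩
      refine ⟨π, fun ρ => ?_⟩
      rw [not_and]
      intro hA hc
      rw [hπ ρ hc] at hA
      exact Bool.false_ne_true hA
  have hEc : μ Eᶜ ≤ (n.factorial : ENNReal) * q ^ (n^2) := by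
    rw [hcompl]
    calc μ (⋃ π : Equiv.Perm (Fin n), U π) ≤ ∑' π : Equiv.Perm (Fin n), μ (U π) :=
          measure_iUnion_le _
      _ ≤ ∑' _ : Equiv.Perm (Fin n), q ^ (n^2) := ENNReal.tsum_le_tsum hUm
      _ = (Fintype.card (Equiv.Perm (Fin n))) * q ^ (n^2) := by
          rw [tsum_fintype, Finset.sum_const, Finset.card_univ, nsmul_eq_mul]
      _ = (n.factorial : ENNReal) * q ^ (n^2) := by
          rw [Fintype.card_perm, Fintype.card_fin]
  -- conclude
  have hmeasE : MeasurableSet E := (Set.toFinite E).measurableSet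
  have hmuE : μ E = 1 - μ Eᶜ := by
    have := prob_compl_eq_one_sub (μ := μ) hmeasE.compl
    rw [compl_compl] at this
    rw [this]
  have hEclt : μ Eᶜ ≤ 1 := prob_le_one
  constructor
  · rw [hmuE, ENNReal.toReal_sub_of_le hEclt ENNReal.one_ne_top, ENNReal.toReal_one]
    have h2 : (μ Eᶜ).toReal ≤ (n.factorial : ℝ) * (1-p)^(n^2) := by
      have h3 := ENNReal.toReal_mono (ENNReal.mul_ne_top (ENNReal.natCast_ne_top _) (ENNReal.pow_ne_top ENNReal.coe_ne_top)) hEc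
      rw [ENNReal.toReal_mul, ENNReal.toReal_pow] at h3
      simpa [ENNReal.coe_toReal, Real.coe_toNNReal _ (by linarith : (0:ℝ) ≤ 1 - p)]
        using h3
    linarith
  · exact ENNReal.toReal_le_of_le_ofReal zero_le_one (by simpa using prob_le_one (μ := μ) (s := E))


lemma factorial_le_stirling (n : ℕ) (hn : 1 ≤ n) :
    (n.factorial : ℝ) ≤ Real.exp (1 + Real.log n / 2 + n * Real.log n - n) := by
  obtain ⟨m, rfl⟩ : ∃ m, n = m + 1 := ⟨n - 1, by omega⟩
  set n := m + 1 with hdefn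
  have hn0 : (0:ℝ) < n := by positivity
  have hpos1 : 0 < Stirling.stirlingSeq n := Stirling.stirlingSeq'_pos m
  have hpos0 : 0 < Stirling.stirlingSeq 1 := Stirling.stirlingSeq'_pos 0
  have h2 := Stirling.log_stirlingSeq'_antitone (Nat.zero_le m)
  simp only [Function.comp_apply, Nat.succ_eq_add_one, Nat.zero_add] at h2
  have h1 : Stirling.stirlingSeq n ≤ Stirling.stirlingSeq 1 :=
    (Real.log_le_log_iff hpos1 hpos0).mp h2
  rw [Stirling.stirlingSeq_one] at h1
  have hden : (0:ℝ) < Real.sqrt (2 * n) * ((n : ℝ) / Real.exp 1) ^ n := by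
    positivity
  have h3 : (n.factorial : ℝ) ≤ (Real.exp 1 / Real.sqrt 2) *
      (Real.sqrt (2 * n) * ((n : ℝ) / Real.exp 1) ^ n) := by
    rw [Stirling.stirlingSeq] at h1
    calc (n.factorial : ℝ) = ((n.factorial : ℝ) / (Real.sqrt (2*n) * ((n:ℝ)/Real.exp 1)^n)) * (Real.sqrt (2*n) * ((n:ℝ)/Real.exp 1)^n) := by
          field_simp
      _ ≤ _ := by
          apply mul_le_mul_of_nonneg_right h1 hden.le
  refine h3.trans (le_of_eq ?_)
  have hs2 : Real.sqrt (2 * (n:ℝ)) = Real.sqrt 2 * Real.sqrt n := Real.sqrt_mul (by norm_num) _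
  have hsn : Real.sqrt (n : ℝ) = Real.exp (Real.log n / 2) := by
    rw [Real.sqrt_eq_rpow, Real.rpow_def_of_pos hn0]
    ring_nf
  have hnn : ((n:ℝ) / Real.exp 1) ^ n = Real.exp ((n:ℝ) * Real.log n - n) := by
    rw [div_pow, ← Real.exp_log (x := (n:ℝ)^n) (by positivity), Real.log_pow,
      ← Real.exp_nat_mul, Real.exp_sub]
    norm_num
  rw [hs2, hsn, hnn]
  rw [show (1 : ℝ) + Real.log n / 2 + n * Real.log n - n
      = 1 + (Real.log n / 2 + ((n:ℝ) * Real.log n - n)) by ring,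
    Real.exp_add, Real.exp_add]
  have hs0 : Real.sqrt 2 ≠ 0 := by positivity
  field_simp


lemma bound_tendsto_zero (ω : ℕ → ℝ)
    (hω : Filter.Tendsto ω Filter.atTop Filter.atTop) (p : ℕ → ℝ)
    (hp : ∀ n : ℕ, p n = Real.log n / n - 1 / n + Real.log n / (2 * (n : ℝ) ^ 2)
      + ω n / (n : ℝ) ^ 2)
    (hrange : ∀ᶠ n in Filter.atTop, p n ∈ Set.Ioo (0 : ℝ) 1) :
    Tendsto (fun n => (n.factorial : ℝ) * (1 - p n)^(n^2)) atTop (nhds 0) := by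
  have hg : Tendsto (fun n : ℕ => Real.exp (1 - ω n)) atTop (nhds 0) := by
    apply Real.tendsto_exp_atBot.comp
    apply tendsto_atBot_add_const_left _ 1
    exact tendsto_neg_atBot_iff.mpr hω
  apply squeeze_zero'
  · filter_upwards [hrange] with n hn
    have : (0:ℝ) ≤ 1 - p n := by linarith [hn.2]
    positivity
  · filter_upwards [hrange, eventually_ge_atTop 1] with n hn hn1
    have hn0 : (0:ℝ) < n := by exact_mod_cast hn1
    have hpn : (n:ℝ)^2 * p n = n * Real.log n - n + Real.log n / 2 + ω n := by
      rw [hp n]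
      field_simp
    have h1 : (1 - p n)^(n^2) ≤ Real.exp ((n^2 : ℕ) * (-p n)) := by
      rw [Real.exp_nat_mul]
      apply pow_le_pow_left₀ (by linarith [hn.2])
      have := Real.add_one_le_exp (-p n)
      linarith
    have h2 := factorial_le_stirling n hn1
    calc (n.factorial : ℝ) * (1 - p n)^(n^2)
        ≤ Real.exp (1 + Real.log n / 2 + n * Real.log n - n)
            * Real.exp ((n^2 : ℕ) * (-p n)) := by
          apply mul_le_mul h2 h1 (pow_nonneg (by linarith [hn.2]) _) (Real.exp_pos _).le
      _ = Real.exp (1 - ω n) := by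
          rw [← Real.exp_add]
          congr 1
          push_cast
          rw [mul_neg]
          linarith
  · exact hg

theorem coverage_prob_tendsto_one (ω : ℕ → ℝ)
    (hω : Filter.Tendsto ω Filter.atTop Filter.atTop) (p : ℕ → ℝ)
    (hp : ∀ n : ℕ, p n = Real.log n / n - 1 / n + Real.log n / (2 * (n : ℝ) ^ 2)
      + ω n / (n : ℝ) ^ 2)
    (hrange : ∀ᶠ n in Filter.atTop, p n ∈ Set.Ioo (0 : ℝ) 1) :
    Filter.Tendsto (fun n : ℕ =>
        (coverMeasure n (p n)
          {A | ∀ π : Equiv.Perm (Fin n), ∃ ρ : Equiv.Perm (Fin (n+1)),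
            A ρ = true ∧ Covers ρ π}).toReal)
      Filter.atTop (nhds 1) := by
  have hb := bound_tendsto_zero ω hω p hp hrange
  have hlim : Tendsto (fun n : ℕ =>
      1 - (n.factorial : ℝ) * (1 - p n)^(n^2)) atTop (nhds 1) := by
    have h1 : Tendsto (fun _ : ℕ => (1:ℝ)) atTop (nhds 1) := tendsto_const_nhds
    simpa using h1.sub hb
  apply tendsto_of_tendsto_of_tendsto_of_le_of_le' hlim tendsto_const_nhds
  · filter_upwards [hrange] with n hn
    exact (coverMeasure_bounds n (p n) hn.1.le hn.2.le).1
  · filter_upwards [hrange] with n hn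
    exact (coverMeasure_bounds n (p n) hn.1.le hn.2.le).2
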